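/- Let S be a finite nonempty state space and A_1, ..., A_n finite nonempty action sets. The set Π^S of joint policies induced by signal-instructed deterministic decentralized policies — i.e., the set of functions of the form s ↦ (pushforward of p under z ↦ (f_1(s,z), ..., f_n(s,z))) for some signal space Z, some p ∈ PMF(Z), and some deterministic maps f_i : S × Z → A_i — is equal to the set Π^C of all centralized joint policies, i.e., all functions S → PMF(A_1 × ⋯ × A_n). -/

import Mathlib

/-!
Given a centralized policy `π`, take as signal a whole table `g : S → A` of joint actions, drawn
from the product distribution `⊗ₛ π s`; agent `i` plays `(g s) i` in state `s`. The marginal of the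
product distribution at `s` is `π s`, so this reproduces `π`. Relabelling the finitely many tables
by `Fin N` puts the signal space in `Type`.
-/

open Finset

namespace PMF

theorem sum_coe_eq_one {α : Type*} [Fintype α] (p : PMF α) : ∑ a, p a = 1 := by
  simpa only [tsum_fintype] using p.tsum_coe

section pi

variable {ι : Type*} [Fintype ι] [DecidableEq ι] {β : ι → Type*} [∀ i, Fintype (β i)]

noncomputable def pi (μ : ∀ i, PMF (β i)) : PMF (∀ i, β i) :=
  ofFintype (fun x => ∏ i, μ i (x i)) <| by
    rw [← Fintype.prod_sum]
    exact prod_eq_one fun i _ => (μ i).sum_coe_eq_one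

theorem pi_apply (μ : ∀ i, PMF (β i)) (x : ∀ i, β i) : pi μ x = ∏ i, μ i (x i) := rfl

theorem map_eval_pi (μ : ∀ i, PMF (β i)) (i : ι) : (pi μ).map (Function.eval i) = μ i := by
  classical
  ext a
  -- Restricting the `i`-th factor to `a` turns the marginal into a product of sums.
  set ν : ∀ j, β j → ENNReal :=
    Function.update (fun j => ⇑(μ j)) i (fun b => if b = a then μ i b else 0) with hν
  have h_term (x : ∀ j, β j) :
      (if a = x i then pi μ x else 0) = ∏ j, ν j (x j) := by
    by_cases hx : x i = a
    · rw [if_pos hx.symm, pi_apply]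
      refine prod_congr rfl fun j _ => ?_
      rcases eq_or_ne j i with rfl | hj
      · simp [hν, hx]
      · simp [hν, hj]
    · rw [if_neg (Ne.symm hx), eq_comm]
      exact prod_eq_zero (mem_univ i) (by simp [hν, hx])
  have h_factor (j : ι) (hj : j ≠ i) : ∑ b, ν j b = 1 := by
    simpa [hν, hj] using (μ j).sum_coe_eq_one
  calc (pi μ).map (Function.eval i) a
      = ∑ x : ∀ j, β j, ∏ j, ν j (x j) := by
        rw [map_apply, tsum_fintype]
        exact sum_congr rfl fun x _ => h_term x
    _ = ∏ j, ∑ b, ν j b := (Fintype.prod_sum ν).symm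
    _ = ∑ b, ν i b := prod_eq_single i (fun j _ hj => h_factor j hj) (by simp)
    _ = μ i a := by simp [hν]

end pi

end PMF

theorem signal_policy_space_eq_centralized_general
    (S : Type*) [Fintype S]
    (n : ℕ) (A : Fin n → Type*) [∀ i, Fintype (A i)] :
    {π : S → PMF (∀ i, A i) |
        ∃ (Z : Type) (_ : Fintype Z) (p : PMF Z) (f : ∀ i : Fin n, S → Z → A i),
          π = fun s => p.map (fun z => fun i => f i s z)} =
      (Set.univ : Set (S → PMF (∀ i, A i))) := by
  classical
  refine Set.eq_univ_of_forall fun π => ?_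
  let e := Fintype.equivFin (S → ∀ i, A i)
  refine ⟨Fin (Fintype.card (S → ∀ i, A i)), inferInstance, (PMF.pi π).map e,
    fun i s z => e.symm z s i, ?_⟩
  funext s
  rw [PMF.map_comp, ← PMF.map_eval_pi π s]
  congr 1
  funext g
  simp

/-- The set of joint policies induced by signal-instructed deterministic
decentralized policies equals the set of all centralized joint policies
`S → PMF (∀ i, A i)`. -/
theorem signal_policy_space_eq_centralized
    (S : Type*) [Fintype S] [Nonempty S]
    (n : ℕ) (A : Fin n → Type*) [∀ i, Fintype (A i)] [∀ i, Nonempty (A i)] :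
    {π : S → PMF (∀ i, A i) |
        ∃ (Z : Type) (_ : Fintype Z) (p : PMF Z) (f : ∀ i : Fin n, S → Z → A i),
          π = fun s => p.map (fun z => fun i => f i s z)} =
      (Set.univ : Set (S → PMF (∀ i, A i))) :=
  signal_policy_space_eq_centralized_general S n A
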